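/- If the Aubry set Ω_A is irreducible (i.e. S_A(x,y) = 0 for all x,y ∈ Ω_A), then every calibrated subaction of A is constant on Ω_A, and any two continuous calibrated subactions of A differ by a constant. -/
import Mathlib


open MeasureTheory Filter Topology

/-- `wordComp φ [j₁,…,jₙ] x = φ_{j₁} ∘ ⋯ ∘ φ_{jₙ} (x)`. -/
def wordComp {J X : Type*} (φ : J → X → X) : List J → X → X
  | [], x => x
  | j :: t, x => φ j (wordComp φ t x)

/-- `birkSum φ A m ω x = Σ_k A(j_k, φ_{(j_{k+1},…,j_n)}(x)) − n·m` for `ω = (j₁,…,jₙ)`. -/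
def birkSum {J X : Type*} (φ : J → X → X) (A : J → X → ℝ) (m : ℝ) :
    List J → X → ℝ
  | [], _ => 0
  | j :: t, x => A j (wordComp φ t x) - m + birkSum φ A m t x

/-- The Mañé potential `S_A(x,y)`, as an extended real number. -/
noncomputable def manePot {J X : Type*} [MetricSpace X] (φ : J → X → X)
    (A : J → X → ℝ) (m : ℝ) (x y : X) : EReal :=
  ⨅ (ε : ℝ) (_ : 0 < ε),
    sSup {s : EReal | ∃ ω : List J, ω ≠ [] ∧ dist x (wordComp φ ω y) < ε ∧
      s = ((birkSum φ A m ω y : ℝ) : EReal)}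

/-- The Aubry set `Ω_A = {x : S_A(x,x) = 0}`. -/
noncomputable def aubry {J X : Type*} [MetricSpace X] (φ : J → X → X)
    (A : J → X → ℝ) (m : ℝ) : Set X :=
  {x : X | manePot φ A m x x = 0}

/-- A Borel probability `π` on `J × X` is holonomic for the IFS `φ`. -/
def Holonomic {J X : Type*} [MeasurableSpace J] [MeasurableSpace X]
    [TopologicalSpace X] (φ : J → X → X) (π : Measure (J × X)) : Prop :=
  IsProbabilityMeasure π ∧
    ∀ g : C(X, ℝ), (∫ p, g p.2 ∂π) = ∫ p, g (φ p.1 p.2) ∂π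




lemma wordComp_append {J X : Type*} (φ : J → X → X) (a b : List J) (x : X) :
    wordComp φ (a ++ b) x = wordComp φ a (wordComp φ b x) := by
  induction a with
  | nil => rfl
  | cons j t ih => simp [wordComp, ih]

lemma birkSum_append {J X : Type*} (φ : J → X → X) (A : J → X → ℝ) (m : ℝ) (a b : List J) (x : X) :
    birkSum φ A m (a ++ b) x = birkSum φ A m a (wordComp φ b x) + birkSum φ A m b x := by
  induction a with
  | nil => simp [birkSum]
  | cons j t ih =>
    simp only [List.cons_append, birkSum, List.append_eq, wordComp_append, ih]
    ring

lemma wordComp_dist {J X : Type*} [PseudoMetricSpace X] (φ : J → X → X) (γ : ℝ) (hγ0 : 0 ≤ γ)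
    (hφ : ∀ j x x', dist (φ j x) (φ j x') ≤ γ * dist x x') (ω : List J) (x x' : X) :
    dist (wordComp φ ω x) (wordComp φ ω x') ≤ γ ^ ω.length * dist x x' := by
  induction ω with
  | nil => simp [wordComp]
  | cons j t ih =>
    calc dist (wordComp φ (j::t) x) (wordComp φ (j::t) x')
        ≤ γ * dist (wordComp φ t x) (wordComp φ t x') := hφ _ _ _
      _ ≤ γ * (γ ^ t.length * dist x x') := mul_le_mul_of_nonneg_left ih hγ0
      _ = γ ^ (j::t).length * dist x x' := by rw [List.length_cons, pow_succ]; ring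

lemma geom_bound (γ : ℝ) (hγ0 : 0 ≤ γ) (hγ1 : γ < 1) (n : ℕ) :
    (∑ i ∈ Finset.range n, γ ^ i) ≤ (1 - γ)⁻¹ := by
  have h := geom_sum_mul γ n
  have hp : 0 < 1 - γ := by linarith
  have hinv : (1 - γ) * (1 - γ)⁻¹ = 1 := mul_inv_cancel₀ hp.ne'
  nlinarith [pow_nonneg hγ0 n]

lemma birkSum_lip {J X : Type*} [PseudoMetricSpace X] (φ : J → X → X) (A : J → X → ℝ)
    (m γ Lp : ℝ) (hγ0 : 0 ≤ γ) (hγ1 : γ < 1) (hLp : 0 ≤ Lp)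
    (hφ : ∀ j x x', dist (φ j x) (φ j x') ≤ γ * dist x x')
    (hA : ∀ j (x x' : X), |A j x - A j x'| ≤ Lp * dist x x')
    (ω : List J) (x x' : X) :
    |birkSum φ A m ω x - birkSum φ A m ω x'| ≤ Lp * (1 - γ)⁻¹ * dist x x' := by
  have key : ∀ ω : List J, |birkSum φ A m ω x - birkSum φ A m ω x'| ≤
      Lp * (∑ i ∈ Finset.range ω.length, γ ^ i) * dist x x' := by
    intro ω
    induction ω with
    | nil => simp [birkSum]
    | cons j t ih =>
      have h1 : |A j (wordComp φ t x) - A j (wordComp φ t x')| ≤ Lp * (γ ^ t.length * dist x x') :=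
        (hA j _ _).trans (mul_le_mul_of_nonneg_left (wordComp_dist φ γ hγ0 hφ t x x') hLp)
      have h2 : birkSum φ A m (j::t) x - birkSum φ A m (j::t) x'
          = (A j (wordComp φ t x) - A j (wordComp φ t x'))
            + (birkSum φ A m t x - birkSum φ A m t x') := by
        simp only [birkSum]; ring
      rw [h2, List.length_cons, Finset.sum_range_succ]
      calc |_ + _| ≤ _ + _ := abs_add_le _ _
        _ ≤ Lp * (γ ^ t.length * dist x x') + Lp * (∑ i ∈ Finset.range t.length, γ ^ i) * dist x x' := add_le_add h1 ih
        _ = Lp * ((∑ i ∈ Finset.range t.length, γ ^ i) + γ ^ t.length) * dist x x' := by ring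
  refine (key ω).trans ?_
  have hge := geom_bound γ hγ0 hγ1 ω.length
  have hd := dist_nonneg (x := x) (y := x')
  calc Lp * (∑ i ∈ Finset.range ω.length, γ ^ i) * dist x x'
      = (Lp * dist x x') * (∑ i ∈ Finset.range ω.length, γ ^ i) := by ring
    _ ≤ (Lp * dist x x') * (1 - γ)⁻¹ := mul_le_mul_of_nonneg_left hge (mul_nonneg hLp hd)
    _ = Lp * (1 - γ)⁻¹ * dist x x' := by ring

lemma birkSum_le_sub {J X : Type*} (φ : J → X → X) (A : J → X → ℝ) (m : ℝ) (V : X → ℝ)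
    (hVle : ∀ j x, A j x + V (φ j x) - V x - m ≤ 0) (ω : List J) (x : X) :
    birkSum φ A m ω x ≤ V x - V (wordComp φ ω x) := by
  induction ω with
  | nil => simp [birkSum, wordComp]
  | cons j t ih =>
    have := hVle j (wordComp φ t x)
    simp only [birkSum, wordComp]
    linarith

def calStep {J X : Type*} (φ : J → X → X) (F : X → J) (y : X) : X := φ (F y) y

noncomputable def calWord {J X : Type*} (φ : J → X → X) (F : X → J) (x : X) : ℕ → List J
  | 0 => []
  | n+1 => F ((calStep φ F)^[n] x) :: calWord φ F x n

lemma calWord_length {J X : Type*} (φ : J → X → X) (F : X → J) (x : X) (n : ℕ) :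
    (calWord φ F x n).length = n := by
  induction n with
  | zero => rfl
  | succ n ih => simp [calWord, ih]

lemma calWord_wordComp {J X : Type*} (φ : J → X → X) (F : X → J) (x : X) (n : ℕ) :
    wordComp φ (calWord φ F x n) x = (calStep φ F)^[n] x := by
  induction n with
  | zero => rfl
  | succ n ih =>
    rw [Function.iterate_succ_apply']
    simp only [calWord, wordComp, ih, calStep]

lemma calWord_birkSum {J X : Type*} (φ : J → X → X) (A : J → X → ℝ) (m : ℝ) (F : X → J)
    (V : X → ℝ) (hF : ∀ y, A (F y) y + V (φ (F y) y) - V y - m = 0) (x : X) (n : ℕ) :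
    birkSum φ A m (calWord φ F x n) x = V x - V ((calStep φ F)^[n] x) := by
  induction n with
  | zero => simp [calWord, birkSum]
  | succ n ih =>
    have h := hF ((calStep φ F)^[n] x)
    rw [Function.iterate_succ_apply']
    simp only [calWord, birkSum, calWord_wordComp, ih, calStep]
    linarith

lemma calWord_split {J X : Type*} (φ : J → X → X) (F : X → J) (x : X) (n m : ℕ) :
    ∃ seg : List J, seg.length = m ∧ calWord φ F x (n + m) = seg ++ calWord φ F x n := by
  induction m with
  | zero => exact ⟨[], rfl, rfl⟩
  | succ m ih =>
    obtain ⟨seg, hl, hs⟩ := ih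
    refine ⟨F ((calStep φ F)^[n+m] x) :: seg, by simp [hl], ?_⟩
    show F ((calStep φ F)^[n+m] x) :: calWord φ F x (n+m) = _
    rw [hs]; rfl

lemma ereal_le_coe_of_forall {m : EReal} {c : ℝ} (h : ∀ δ : ℝ, 0 < δ → m ≤ ((c + δ : ℝ) : EReal)) :
    m ≤ (c : EReal) := by
  by_contra hlt
  push_neg at hlt
  obtain ⟨r, hr1, hr2⟩ := EReal.exists_between_coe_real hlt
  have hcr : c < r := by exact_mod_cast hr1
  have := h (r - c) (by linarith)
  rw [show c + (r - c) = r by ring] at this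
  exact absurd this (not_le.mpr hr2)

lemma ereal_coe_le_of_forall {m : EReal} {c : ℝ} (h : ∀ δ : ℝ, 0 < δ → ((c - δ : ℝ) : EReal) ≤ m) :
    (c : EReal) ≤ m := by
  by_contra hlt
  push_neg at hlt
  obtain ⟨r, hr1, hr2⟩ := EReal.exists_between_coe_real hlt
  have hrc : r < c := by exact_mod_cast hr2
  have := h (c - r) (by linarith)
  rw [show c - (c - r) = r by ring] at this
  exact absurd this (not_le.mpr hr1)



lemma manePot_le_calib {J X : Type*} [MetricSpace X] [CompactSpace X]
    (φ : J → X → X) (A : J → X → ℝ) (m : ℝ) (V : X → ℝ) (hVc : Continuous V)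
    (hVle : ∀ j x, A j x + V (φ j x) - V x - m ≤ 0) (a b : X) :
    manePot φ A m a b ≤ ((V b - V a : ℝ) : EReal) := by
  apply ereal_le_coe_of_forall
  intro δ hδ
  obtain ⟨ε, hε, hmod⟩ := Metric.uniformContinuous_iff.mp
    (CompactSpace.uniformContinuous_of_continuous hVc) δ hδ
  refine le_trans (iInf₂_le ε hε) (sSup_le ?_)
  rintro s ⟨ω, -, hd, rfl⟩
  rw [EReal.coe_le_coe_iff]
  have h1 := birkSum_le_sub φ A m V hVle ω b
  have h2 := hmod hd
  rw [Real.dist_eq] at h2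
  have := abs_lt.mp h2
  linarith [this.1, this.2]

lemma le_manePot_of {J X : Type*} [MetricSpace X] (φ : J → X → X) (A : J → X → ℝ) (m : ℝ)
    (a b : X) (c : ℝ)
    (h : ∀ ε : ℝ, 0 < ε → ∀ δ : ℝ, 0 < δ → ∃ ω : List J, ω ≠ [] ∧
      dist a (wordComp φ ω b) < ε ∧ c - δ ≤ birkSum φ A m ω b) :
    (c : EReal) ≤ manePot φ A m a b := by
  refine le_iInf₂ fun ε hε => ?_
  apply ereal_coe_le_of_forall
  intro δ hδ
  obtain ⟨ω, h1, h2, h3⟩ := h ε hε δ hδ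
  exact le_trans (EReal.coe_le_coe_iff.mpr h3) (le_sSup ⟨ω, h1, h2, rfl⟩)

lemma calib_pointwise {J X : Type*} [MetricSpace J] [MetricSpace X] [CompactSpace J] [Nonempty J]
    (γ L : ℝ) (hγ0 : 0 ≤ γ) (φ : J → X → X)
    (hc : ∀ j₁ j₂ : J, ∀ x₁ x₂ : X,
      dist (φ j₁ x₁) (φ j₂ x₂) ≤ γ * (dist j₁ j₂ + dist x₁ x₂))
    (A : J → X → ℝ)
    (hA : ∀ j₁ j₂ : J, ∀ x₁ x₂ : X,
      |A j₁ x₁ - A j₂ x₂| ≤ L * (dist j₁ j₂ + dist x₁ x₂))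
    (m : ℝ) (V : X → ℝ) (hVc : Continuous V)
    (hV : ∀ x, (⨆ j : J, (A j x + V (φ j x) - V x - m)) = 0) :
    (∀ j x, A j x + V (φ j x) - V x - m ≤ 0) ∧
    (∀ x, ∃ j, A j x + V (φ j x) - V x - m = 0) := by
  have hcont : ∀ x, Continuous (fun j : J => A j x + V (φ j x) - V x - m) := by
    intro x
    have h1 : Continuous fun j : J => A j x := by
      refine (LipschitzWith.of_dist_le_mul (K := ⟨max L 0, le_max_right _ _⟩) ?_).continuous
      intro j₁ j₂
      rw [Real.dist_eq]
      calc |A j₁ x - A j₂ x| ≤ L * (dist j₁ j₂ + dist x x) := hA j₁ j₂ x x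
        _ = L * dist j₁ j₂ := by simp
        _ ≤ max L 0 * dist j₁ j₂ :=
            mul_le_mul_of_nonneg_right (le_max_left _ _) dist_nonneg
    have h2 : Continuous fun j : J => φ j x := by
      refine (LipschitzWith.of_dist_le_mul (K := ⟨γ, hγ0⟩) ?_).continuous
      intro j₁ j₂
      calc dist (φ j₁ x) (φ j₂ x) ≤ γ * (dist j₁ j₂ + dist x x) := hc j₁ j₂ x x
        _ = γ * dist j₁ j₂ := by simp
        _ = (⟨γ, hγ0⟩ : NNReal) * dist j₁ j₂ := rfl
    exact ((h1.add (hVc.comp h2)).sub continuous_const).sub continuous_const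
  constructor
  · intro j x
    obtain ⟨j₀, -, hj₀'⟩ := isCompact_univ.exists_isMaxOn Set.univ_nonempty (hcont x).continuousOn
    have hj₀ : ∀ j : J, A j x + V (φ j x) - V x - m ≤ A j₀ x + V (φ j₀ x) - V x - m :=
      fun j => hj₀' (Set.mem_univ j)
    have hb : BddAbove (Set.range fun j : J => A j x + V (φ j x) - V x - m) := by
      refine ⟨A j₀ x + V (φ j₀ x) - V x - m, ?_⟩
      rintro y ⟨j', rfl⟩
      exact hj₀ j'
    have := le_ciSup hb j
    rwa [hV x] at this
  · intro x
    obtain ⟨j₀, -, hj₀'⟩ := isCompact_univ.exists_isMaxOn Set.univ_nonempty (hcont x).continuousOn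
    have hj₀ : ∀ j : J, A j x + V (φ j x) - V x - m ≤ A j₀ x + V (φ j₀ x) - V x - m :=
      fun j => hj₀' (Set.mem_univ j)
    have hb : BddAbove (Set.range fun j : J => A j x + V (φ j x) - V x - m) := by
      refine ⟨A j₀ x + V (φ j₀ x) - V x - m, ?_⟩
      rintro y ⟨j', rfl⟩
      exact hj₀ j'
    have hle : (⨆ j : J, (A j x + V (φ j x) - V x - m)) ≤ A j₀ x + V (φ j₀ x) - V x - m :=
      ciSup_le hj₀
    have hge := le_ciSup hb j₀
    rw [hV x] at hle hge
    exact ⟨j₀, le_antisymm hge hle⟩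

open Filter Topology in
lemma key_lemma {J X : Type*} [MetricSpace J] [MetricSpace X]
    [CompactSpace J] [CompactSpace X] [Nonempty J]
    (γ : ℝ) (hγ0 : 0 < γ) (hγ1 : γ < 1)
    (φ : J → X → X)
    (hc : ∀ j₁ j₂ : J, ∀ x₁ x₂ : X,
      dist (φ j₁ x₁) (φ j₂ x₂) ≤ γ * (dist j₁ j₂ + dist x₁ x₂))
    (A : J → X → ℝ) (L : ℝ)
    (hA : ∀ j₁ j₂ : J, ∀ x₁ x₂ : X,
      |A j₁ x₁ - A j₂ x₂| ≤ L * (dist j₁ j₂ + dist x₁ x₂))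
    (m : ℝ) (V : X → ℝ) (hVc : Continuous V)
    (hV : ∀ x, (⨆ j : J, (A j x + V (φ j x) - V x - m)) = 0) (x : X) :
    ∃ z, z ∈ aubry φ A m ∧ ((V x - V z : ℝ) : EReal) ≤ manePot φ A m z x := by
  obtain ⟨hVle, hatt⟩ := calib_pointwise γ L hγ0.le φ hc A hA m V hVc hV
  set Lp : ℝ := max L 0 with hLpdef
  have hLp : 0 ≤ Lp := le_max_right _ _
  have hA' : ∀ j (a b : X), |A j a - A j b| ≤ Lp * dist a b := by
    intro j a b
    calc |A j a - A j b| ≤ L * (dist j j + dist a b) := hA j j a b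
      _ = L * dist a b := by simp
      _ ≤ Lp * dist a b := mul_le_mul_of_nonneg_right (le_max_left _ _) dist_nonneg
  have hφ' : ∀ j (a b : X), dist (φ j a) (φ j b) ≤ γ * dist a b := by
    intro j a b
    calc dist (φ j a) (φ j b) ≤ γ * (dist j j + dist a b) := hc j j a b
      _ = γ * dist a b := by simp
  set C : ℝ := Lp * (1 - γ)⁻¹ with hCdef
  have hC : 0 ≤ C := mul_nonneg hLp (inv_nonneg.mpr (by linarith))
  set F : X → J := fun y => (hatt y).choose with hFdef
  have hF : ∀ y, A (F y) y + V (φ (F y) y) - V y - m = 0 := fun y => (hatt y).choose_spec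
  set orbit : ℕ → X := fun n => (calStep φ F)^[n] x with horbdef
  have hw : ∀ n, wordComp φ (calWord φ F x n) x = orbit n := fun n => calWord_wordComp φ F x n
  have hbk : ∀ n, birkSum φ A m (calWord φ F x n) x = V x - V (orbit n) :=
    fun n => calWord_birkSum φ A m F V hF x n
  obtain ⟨z, -, s, hs, hz⟩ := isCompact_univ.tendsto_subseq (x := orbit) (fun n => Set.mem_univ _)
  have hVz : Tendsto (fun k => V (orbit (s k))) atTop (𝓝 (V z)) :=
    ((hVc.tendsto z).comp hz)
  have hdz : ∀ ρ : ℝ, 0 < ρ → ∃ N, ∀ k ≥ N, dist (orbit (s k)) z < ρ :=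
    fun ρ hρ => Metric.tendsto_atTop.mp hz ρ hρ
  have hdV : ∀ ρ : ℝ, 0 < ρ → ∃ N, ∀ k ≥ N, |V (orbit (s k)) - V z| < ρ := by
    intro ρ hρ
    obtain ⟨N, hN⟩ := Metric.tendsto_atTop.mp hVz ρ hρ
    exact ⟨N, fun k hk => by have := hN k hk; rwa [Real.dist_eq] at this⟩
  have hzaubry : z ∈ aubry φ A m := by
    have hup : manePot φ A m z z ≤ (0 : EReal) := by
      have := manePot_le_calib φ A m V hVc hVle z z
      simpa using this
    have hlow : ((0:ℝ) : EReal) ≤ manePot φ A m z z := by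
      apply le_manePot_of
      intro ε hε δ hδ
      set ρ : ℝ := min (ε/2) (δ/(2*(C+1))) with hρdef
      have hρ : 0 < ρ := lt_min (by linarith) (by positivity)
      obtain ⟨N₁, hN₁⟩ := hdz ρ hρ
      obtain ⟨N₂, hN₂⟩ := hdV (δ/4) (by linarith)
      set N : ℕ := max N₁ N₂ with hNdef
      set n : ℕ := s N with hndef
      set n' : ℕ := s (N+1) with hn'def
      have hnn' : n < n' := hs (Nat.lt_succ_self N)
      obtain ⟨seg, hlen, hsplit⟩ := calWord_split φ F x n (n' - n)
      have hnm : n + (n' - n) = n' := Nat.add_sub_cancel' hnn'.le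
      rw [hnm] at hsplit
      have hsegne : seg ≠ [] := by
        rw [← List.length_pos_iff, hlen]
        omega
      have hwc : wordComp φ seg (orbit n) = orbit n' := by
        rw [← hw n, ← wordComp_append, ← hsplit, hw]
      have hbs : birkSum φ A m seg (orbit n) = V (orbit n) - V (orbit n') := by
        have := birkSum_append φ A m seg (calWord φ F x n) x
        rw [← hsplit, hbk, hbk, hw] at this
        linarith
      have hd1 : dist (orbit n) z < ρ := hN₁ N (le_max_left _ _)
      have hd2 : dist (orbit n') z < ρ := hN₁ (N+1) (le_trans (le_max_left _ _) (Nat.le_succ N))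
      have hV1 : |V (orbit n) - V z| < δ/4 := hN₂ N (le_max_right _ _)
      have hV2 : |V (orbit n') - V z| < δ/4 := hN₂ (N+1) (le_trans (le_max_right _ _) (Nat.le_succ N))
      refine ⟨seg, hsegne, ?_, ?_⟩
      · have hcontr : dist (wordComp φ seg (orbit n)) (wordComp φ seg z)
            ≤ γ ^ seg.length * dist (orbit n) z := wordComp_dist φ γ hγ0.le hφ' seg _ _
        have hpow : γ ^ seg.length ≤ 1 := pow_le_one₀ hγ0.le hγ1.le
        have h4 : dist (orbit n') (wordComp φ seg z) ≤ 1 * dist (orbit n) z := by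
          calc dist (orbit n') (wordComp φ seg z)
              = dist (wordComp φ seg (orbit n)) (wordComp φ seg z) := by rw [hwc]
            _ ≤ γ ^ seg.length * dist (orbit n) z := hcontr
            _ ≤ 1 * dist (orbit n) z := mul_le_mul_of_nonneg_right hpow dist_nonneg
        have htri := dist_triangle z (orbit n') (wordComp φ seg z)
        rw [dist_comm z (orbit n')] at htri
        have hρε : ρ ≤ ε/2 := min_le_left _ _
        linarith
      · have hlip := birkSum_lip φ A m γ Lp hγ0.le hγ1 hLp hφ' hA' seg z (orbit n)
        rw [← hCdef] at hlip
        have h5 : birkSum φ A m seg (orbit n) - C * dist z (orbit n) ≤ birkSum φ A m seg z := by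
          have := (abs_le.mp hlip).1
          linarith
        have hρδ : ρ ≤ δ/(2*(C+1)) := min_le_right _ _
        have hCρ : C * dist z (orbit n) ≤ δ/2 := by
          rw [dist_comm]
          have h8 : C * dist (orbit n) z ≤ C * ρ :=
            mul_le_mul_of_nonneg_left hd1.le hC
          have h9 : C * ρ ≤ C * (δ/(2*(C+1))) := mul_le_mul_of_nonneg_left hρδ hC
          have h10 : C * (δ/(2*(C+1))) ≤ δ/2 := by
            rw [mul_div_assoc']
            rw [div_le_div_iff₀ (by positivity) (by norm_num : (0:ℝ) < 2)]
            nlinarith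
          linarith
        have hVV := abs_le.mp hV1.le
        have hVV2 := abs_le.mp hV2.le
        rw [hbs] at h5
        linarith
    exact le_antisymm hup (by rwa [← EReal.coe_zero])
  refine ⟨z, hzaubry, ?_⟩
  apply le_manePot_of
  intro ε hε δ hδ
  obtain ⟨N₁, hN₁⟩ := hdz ε hε
  obtain ⟨N₂, hN₂⟩ := hdV δ hδ
  set k : ℕ := max (max N₁ N₂) 1 with hkdef
  refine ⟨calWord φ F x (s k), ?_, ?_, ?_⟩
  · rw [← List.length_pos_iff, calWord_length]
    have h1 : 1 ≤ k := le_max_right _ _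
    have h2 : k ≤ s k := hs.le_apply
    omega
  · rw [hw, dist_comm]
    exact hN₁ k (le_trans (le_max_left _ _) (le_max_left _ _))
  · rw [hbk]
    have := abs_le.mp (hN₂ k (le_trans (le_max_right _ _) (le_max_left _ _))).le
    linarith

theorem stmt10 {J X : Type*} [MetricSpace J] [MetricSpace X]
    [CompactSpace J] [CompactSpace X] [Nonempty J] [Nonempty X]
    [MeasurableSpace J] [BorelSpace J] [MeasurableSpace X] [BorelSpace X]
    (γ : ℝ) (hγ0 : 0 < γ) (hγ1 : γ < 1)
    (φ : J → X → X)
    (hc : ∀ j₁ j₂ : J, ∀ x₁ x₂ : X,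
      dist (φ j₁ x₁) (φ j₂ x₂) ≤ γ * (dist j₁ j₂ + dist x₁ x₂))
    (A : J → X → ℝ) (L : ℝ)
    (hA : ∀ j₁ j₂ : J, ∀ x₁ x₂ : X,
      |A j₁ x₁ - A j₂ x₂| ≤ L * (dist j₁ j₂ + dist x₁ x₂))
    (mA : ℝ)
    (hmA : mA = sSup {r : ℝ | ∃ π : Measure (J × X),
      Holonomic φ π ∧ r = ∫ p, A p.1 p.2 ∂π})
    (hirr : ∀ x ∈ aubry φ A mA, ∀ y ∈ aubry φ A mA, manePot φ A mA x y = 0) :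
    (∀ V : X → ℝ, Continuous V →
      (∀ x : X, (⨆ j : J, (A j x + V (φ j x) - V x - mA)) = 0) →
      ∀ x ∈ aubry φ A mA, ∀ y ∈ aubry φ A mA, V x = V y) ∧
    (∀ V U : X → ℝ, Continuous V → Continuous U →
      (∀ x : X, (⨆ j : J, (A j x + V (φ j x) - V x - mA)) = 0) →
      (∀ x : X, (⨆ j : J, (A j x + U (φ j x) - U x - mA)) = 0) →
      ∃ c : ℝ, ∀ x : X, V x = U x + c) := by
  have hconst : ∀ V : X → ℝ, Continuous V →
      (∀ x : X, (⨆ j : J, (A j x + V (φ j x) - V x - mA)) = 0) →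
      ∀ x ∈ aubry φ A mA, ∀ y ∈ aubry φ A mA, V x = V y := by
    intro V hVc hV x hx y hy
    have hVle := (calib_pointwise γ L hγ0.le φ hc A hA mA V hVc hV).1
    have h1 := manePot_le_calib φ A mA V hVc hVle x y
    have h2 := manePot_le_calib φ A mA V hVc hVle y x
    rw [hirr x hx y hy] at h1
    rw [hirr y hy x hx] at h2
    rw [← EReal.coe_zero, EReal.coe_le_coe_iff] at h1 h2
    linarith
  refine ⟨hconst, ?_⟩
  intro V U hVc hUc hV hU
  have hVle := (calib_pointwise γ L hγ0.le φ hc A hA mA V hVc hV).1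
  have hUle := (calib_pointwise γ L hγ0.le φ hc A hA mA U hUc hU).1
  obtain ⟨z₀, hz₀, -⟩ := key_lemma γ hγ0 hγ1 φ hc A L hA mA V hVc hV (Classical.arbitrary X)
  refine ⟨V z₀ - U z₀, fun x => ?_⟩
  obtain ⟨z₁, hz₁, h₁⟩ := key_lemma γ hγ0 hγ1 φ hc A L hA mA V hVc hV x
  obtain ⟨z₂, hz₂, h₂⟩ := key_lemma γ hγ0 hγ1 φ hc A L hA mA U hUc hU x
  have a1 : (V x - V z₁ : ℝ) ≤ U x - U z₁ := by
    have := h₁.trans (manePot_le_calib φ A mA U hUc hUle z₁ x)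
    exact_mod_cast this
  have a2 : (U x - U z₂ : ℝ) ≤ V x - V z₂ := by
    have := h₂.trans (manePot_le_calib φ A mA V hVc hVle z₂ x)
    exact_mod_cast this
  have e1 : V z₁ = V z₀ := hconst V hVc hV z₁ hz₁ z₀ hz₀
  have e2 : U z₁ = U z₀ := hconst U hUc hU z₁ hz₁ z₀ hz₀
  have e3 : V z₂ = V z₀ := hconst V hVc hV z₂ hz₂ z₀ hz₀
  have e4 : U z₂ = U z₀ := hconst U hUc hU z₂ hz₂ z₀ hz₀
  linarith
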